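/- Let Q_{n,0}, Q_{n,1}, Q_{n,2} be Hermite–Padé polynomials of order n for (1, f, f^2), and for each j with 1 ≤ j ≤ n let (P_{n+j,0}, P_{n+j,1}) be a Padé pair of order n + j for f. Then for every r > R and every j = 1, …, n, ∮_{|ζ|=r} Q_{n,2}(ζ) f(ζ)^2 P_{n+j,1}(ζ) dζ = 0. -/

import Mathlib

/-! The identity `Q₂ f² P₁ = P₁ (Q₀ + Q₁ f + Q₂ f²) - Q₁ (P₀ + P₁ f) + (Q₁ P₀ - Q₀ P₁)` splits the
integrand into two remainder terms and a polynomial. Since `1 ≤ j ≤ n`, the remainder terms are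
`O(z⁻²)` at infinity; their circle integrals do not depend on the radius (Cauchy's theorem on
annuli) and are bounded by `O(1/r)`, hence vanish. The polynomial integrates to zero. -/

open Bornology Asymptotics Filter Topology Metric

section ZpowDecay

variable {𝕜 : Type*} [NormedField 𝕜]

theorem isBigO_zpow_zpow_cobounded_of_le {a b : ℤ} (hab : a ≤ b) :
    (· ^ a) =O[cobounded 𝕜] (· ^ b) := by
  refine IsBigO.of_bound' ?_
  filter_upwards [hasBasis_cobounded_norm.mem_of_mem (i := 1) trivial] with z hz
  simpa only [norm_zpow] using zpow_le_zpow_right₀ hz hab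

theorem Asymptotics.IsBigO.mul_zpow {f g : 𝕜 → 𝕜} {a b c : ℤ} (hf : f =O[cobounded 𝕜] (· ^ a))
    (hg : g =O[cobounded 𝕜] (· ^ b)) (habc : a + b ≤ c) :
    (fun z => f z * g z) =O[cobounded 𝕜] (· ^ c) := by
  refine ((hf.mul hg).trans ?_).trans (isBigO_zpow_zpow_cobounded_of_le habc)
  refine (isBigO_refl (· ^ (a + b)) _).congr' ?_ EventuallyEq.rfl
  filter_upwards [hasBasis_cobounded_norm.mem_of_mem (i := 1) trivial] with z hz
  exact zpow_add₀ (norm_pos_iff.mp (one_pos.trans_le hz)) a b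

theorem isBigO_zpow_neg_of_norm_pow_mul_le {g : 𝕜 → 𝕜} {k : ℕ} {C R : ℝ}
    (h : ∀ z : 𝕜, R < ‖z‖ → ‖z ^ k * g z‖ ≤ C) :
    g =O[cobounded 𝕜] (· ^ (-(k : ℤ))) := by
  refine IsBigO.of_bound C ?_
  filter_upwards [hasBasis_cobounded_norm.mem_of_mem (i := max R 0 + 1) trivial] with z hz
  have hzR : R < ‖z‖ := by linarith [le_max_left R 0]
  have hz₀ : 0 < ‖z‖ ^ k := pow_pos (by linarith [le_max_right R 0]) k
  rw [zpow_neg, zpow_natCast, norm_inv, norm_pow, ← div_eq_mul_inv, le_div_iff₀ hz₀, mul_comm]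
  simpa only [norm_mul, norm_pow] using h z hzR

theorem Polynomial.isBigO_cobounded_zpow {P : Polynomial 𝕜} {d : ℕ}
    (hd : P.natDegree ≤ d) : P.eval =O[cobounded 𝕜] (· ^ (d : ℤ)) := by
  simpa using Polynomial.isBigO_cobounded_of_degree_le (Q := Polynomial.X ^ d)
    ((Polynomial.degree_le_of_natDegree_le hd).trans_eq (Polynomial.degree_X_pow d).symm)

end ZpowDecay

section CircleIntegral

variable {E : Type*} [NormedAddCommGroup E] [NormedSpace ℂ E] {g : ℂ → E} {R r : ℝ}

theorem circleIntegral_eq_of_differentiableOn_norm_gt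
    (hg : DifferentiableOn ℂ g {z | R < ‖z‖}) (hr : 0 < r) (hRr : R < r) {r' : ℝ}
    (hrr' : r ≤ r') : (∮ z in C(0, r'), g z) = ∮ z in C(0, r), g z := by
  refine Complex.circleIntegral_eq_of_differentiable_on_annulus_off_countable hr hrr'
    Set.countable_empty (hg.continuousOn.mono fun z hz => ?_) fun z hz => ?_
  · have : r ≤ ‖z‖ := by simpa using hz.2
    exact hRr.trans_le this
  · have : r < ‖z‖ := by simpa using hz.1.2
    exact hg.differentiableAt ((isOpen_lt continuous_const continuous_norm).mem_nhds
      (hRr.trans this))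

theorem tendsto_circleIntegral_atTop_zero_of_isBigO
    (hg : g =O[cobounded ℂ] (· ^ (-2 : ℤ))) :
    Tendsto (fun r => ∮ z in C(0, r), g z) atTop (𝓝 0) := by
  obtain ⟨c, hc⟩ := hg.bound
  obtain ⟨M, -, hM⟩ := hasBasis_cobounded_norm.eventually_iff.mp hc
  have hbound : ∀ᶠ r in atTop, ‖∮ z in C(0, r), g z‖ ≤ 2 * Real.pi * c * r⁻¹ := by
    filter_upwards [eventually_ge_atTop (max M 1)] with r hr
    have hr₀ : 0 < r := one_pos.trans_le ((le_max_right M 1).trans hr)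
    calc ‖∮ z in C(0, r), g z‖ ≤ 2 * Real.pi * r * (c * r ^ (-2 : ℤ)) := by
          refine circleIntegral.norm_integral_le_of_norm_le_const hr₀.le fun z hz => ?_
          rw [mem_sphere_zero_iff_norm] at hz
          have := hM (hz.symm ▸ (le_max_left M 1).trans hr)
          rwa [norm_zpow, hz] at this
      _ = 2 * Real.pi * c * r⁻¹ := by field_simp
  refine squeeze_zero_norm' hbound ?_
  simpa using tendsto_inv_atTop_zero.const_mul (2 * Real.pi * c)

theorem circleIntegral_eq_zero_of_isBigO_zpow_neg_two
    (hg : DifferentiableOn ℂ g {z | R < ‖z‖}) (hdecay : g =O[cobounded ℂ] (· ^ (-2 : ℤ)))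
    (hr : 0 < r) (hRr : R < r) : (∮ z in C(0, r), g z) = 0 :=
  tendsto_nhds_unique (tendsto_const_nhds.congr'
    ((eventually_ge_atTop r).mono fun _ hr' =>
      (circleIntegral_eq_of_differentiableOn_norm_gt hg hr hRr hr').symm))
    (tendsto_circleIntegral_atTop_zero_of_isBigO hdecay)

end CircleIntegral

theorem stmt_3_general
    (R : ℝ) (hR : 0 < R) (f : ℂ → ℂ)
    (hf : DifferentiableOn ℂ f {z : ℂ | R < ‖z‖})
    (n : ℕ) (Q₀ Q₁ Q₂ : Polynomial ℂ)
    (hdeg₁ : Q₁.natDegree ≤ n)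
    (hrem : ∃ C R' : ℝ, ∀ z : ℂ, R' < ‖z‖ →
      ‖z ^ (2 * n + 2) * (Q₀.eval z + Q₁.eval z * f z + Q₂.eval z * (f z) ^ 2)‖ ≤ C)
    (P₀ P₁ : ℕ → Polynomial ℂ)
    (hP : ∀ j : ℕ, 1 ≤ j → j ≤ n →
      ¬(P₀ j = 0 ∧ P₁ j = 0) ∧
      (P₀ j).natDegree ≤ n + j ∧ (P₁ j).natDegree ≤ n + j ∧
      ∃ C R' : ℝ, ∀ z : ℂ, R' < ‖z‖ →
        ‖z ^ (n + j + 1) * ((P₀ j).eval z + (P₁ j).eval z * f z)‖ ≤ C) :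
    ∀ r : ℝ, R < r → ∀ j : ℕ, 1 ≤ j → j ≤ n →
      (∮ ζ in C(0, r), Q₂.eval ζ * (f ζ) ^ 2 * (P₁ j).eval ζ) = 0 := by
  intro r hr j hj₁ hjn
  obtain ⟨C, R', hHP⟩ := hrem
  obtain ⟨-, -, hdegP₁, Cj, Rj, hPade⟩ := hP j hj₁ hjn
  have hr₀ : 0 < r := hR.trans hr
  set F : ℂ → ℂ := fun z => (P₁ j).eval z * (Q₀.eval z + Q₁.eval z * f z + Q₂.eval z * f z ^ 2) -
    Q₁.eval z * ((P₀ j).eval z + (P₁ j).eval z * f z)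
  set p : ℂ → ℂ := fun z => Q₁.eval z * (P₀ j).eval z - Q₀.eval z * (P₁ j).eval z
  have hFd : DifferentiableOn ℂ F {z | R < ‖z‖} := by fun_prop
  have hpd : Differentiable ℂ p := by fun_prop
  have hFdecay : F =O[cobounded ℂ] (· ^ (-2 : ℤ)) :=
    ((Polynomial.isBigO_cobounded_zpow hdegP₁).mul_zpow
        (isBigO_zpow_neg_of_norm_pow_mul_le hHP) (by omega)).sub
      ((Polynomial.isBigO_cobounded_zpow hdeg₁).mul_zpow
        (isBigO_zpow_neg_of_norm_pow_mul_le hPade) (by omega))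
  have hsphere : sphere (0 : ℂ) r ⊆ {z | R < ‖z‖} := fun z hz => by
    simpa [mem_sphere_zero_iff_norm.mp hz] using hr
  calc (∮ ζ in C(0, r), Q₂.eval ζ * (f ζ) ^ 2 * (P₁ j).eval ζ)
      = ∮ ζ in C(0, r), F ζ + p ζ := by congr 1; ext ζ; simp only [F, p]; ring
    _ = (∮ ζ in C(0, r), F ζ) + ∮ ζ in C(0, r), p ζ :=
        circleIntegral.integral_add ((hFd.continuousOn.mono hsphere).circleIntegrable hr₀.le)
          (hpd.continuous.continuousOn.circleIntegrable hr₀.le)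
    _ = 0 := by
        rw [circleIntegral_eq_zero_of_isBigO_zpow_neg_two hFd hFdecay hr₀ hr,
          Complex.circleIntegral_eq_zero_of_differentiable_on_off_countable hr₀.le
            Set.countable_empty hpd.continuous.continuousOn fun z _ => hpd.differentiableAt,
          add_zero]

/-- Combining the Hermite–Padé orthogonality relations with Padé pairs of
orders `n + j` (`1 ≤ j ≤ n`) yields `∮_{|ζ|=r} Q₂(ζ) f(ζ)² P_{n+j,1}(ζ) dζ = 0`. -/
theorem stmt_3
    (R : ℝ) (hR : 0 < R) (f : ℂ → ℂ)
    (hf : DifferentiableOn ℂ f {z : ℂ | R < ‖z‖})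
    (hinf : ∃ g : ℂ → ℂ, ∃ ε > (0 : ℝ), DifferentiableOn ℂ g (Metric.ball (0 : ℂ) ε) ∧
      ∀ w ∈ Metric.ball (0 : ℂ) ε, w ≠ 0 → g w = f w⁻¹)
    (n : ℕ) (Q₀ Q₁ Q₂ : Polynomial ℂ)
    (hne : ¬(Q₀ = 0 ∧ Q₁ = 0 ∧ Q₂ = 0))
    (hdeg₀ : Q₀.natDegree ≤ n) (hdeg₁ : Q₁.natDegree ≤ n) (hdeg₂ : Q₂.natDegree ≤ n)
    (hrem : ∃ C R' : ℝ, ∀ z : ℂ, R' < ‖z‖ →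
      ‖z ^ (2 * n + 2) * (Q₀.eval z + Q₁.eval z * f z + Q₂.eval z * (f z) ^ 2)‖ ≤ C)
    (P₀ P₁ : ℕ → Polynomial ℂ)
    (hP : ∀ j : ℕ, 1 ≤ j → j ≤ n →
      ¬(P₀ j = 0 ∧ P₁ j = 0) ∧
      (P₀ j).natDegree ≤ n + j ∧ (P₁ j).natDegree ≤ n + j ∧
      ∃ C R' : ℝ, ∀ z : ℂ, R' < ‖z‖ →
        ‖z ^ (n + j + 1) * ((P₀ j).eval z + (P₁ j).eval z * f z)‖ ≤ C) :
    ∀ r : ℝ, R < r → ∀ j : ℕ, 1 ≤ j → j ≤ n →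
      (∮ ζ in C(0, r), Q₂.eval ζ * (f ζ) ^ 2 * (P₁ j).eval ζ) = 0 :=
  stmt_3_general R hR f hf n Q₀ Q₁ Q₂ hdeg₁ hrem P₀ P₁ hP
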